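/- arXiv:2006.12283 — 5 statements merged into one kernel-verified Lean document; each statement's English description precedes it below -/
import Mathlib

section
/- Let V be a finite-dimensional complex vector space and let A, B be linear endomorphisms of V ⊗ V. If A ⊗ id_V = id_V ⊗ B as endomorphisms of V ⊗ V ⊗ V, then there exists a linear map f : V → V such that A = id_V ⊗ f and B = f ⊗ id_V. -/
open TensorProduct

/-- If `A ⊗ id = id ⊗ B` as endomorphisms of `V ⊗ V ⊗ V`, then there is a linear map
`f : V → V` with `A = id ⊗ f` and `B = f ⊗ id`. -/
theorem stmt1 {V : Type*} [AddCommGroup V] [Module ℂ V] [FiniteDimensional ℂ V]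
    (A B : V ⊗[ℂ] V →ₗ[ℂ] V ⊗[ℂ] V)
    (h : (TensorProduct.assoc ℂ V V V).toLinearMap ∘ₗ
          TensorProduct.map A LinearMap.id ∘ₗ (TensorProduct.assoc ℂ V V V).symm.toLinearMap =
        TensorProduct.map LinearMap.id B) :
    ∃ f : V →ₗ[ℂ] V,
      A = TensorProduct.map LinearMap.id f ∧ B = TensorProduct.map f LinearMap.id := by
  have hkey : ∀ (x y z : V),
      (TensorProduct.assoc ℂ V V V) (A (x ⊗ₜ y) ⊗ₜ z) = x ⊗ₜ B (y ⊗ₜ z) := by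
    intro x y z
    have := DFunLike.congr_fun h (x ⊗ₜ (y ⊗ₜ z))
    simpa using this
  by_cases hV : Subsingleton V
  · haveI : Subsingleton (V ⊗[ℂ] V) := by
      have hz : ∀ a : V ⊗[ℂ] V, a = 0 := by
        intro a
        induction a using TensorProduct.induction_on with
        | zero => rfl
        | tmul x y => rw [Subsingleton.elim x 0, zero_tmul]
        | add s t hs ht => rw [hs, ht, add_zero]
      exact ⟨fun a b => by rw [hz a, hz b]⟩
    exact ⟨0, Subsingleton.elim _ _, Subsingleton.elim _ _⟩
  · rw [not_subsingleton_iff_nontrivial] at hV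
    obtain ⟨v, hv⟩ := exists_ne (0 : V)
    have h0 : ¬ ∀ φ : Module.Dual ℂ V, φ v = 0 := by
      rw [Module.forall_dual_apply_eq_zero_iff]; exact hv
    push_neg at h0
    obtain ⟨φ₀, hφ₀⟩ := h0
    set φ : V →ₗ[ℂ] ℂ := (φ₀ v)⁻¹ • φ₀ with hφdef
    have hφv : φ v = 1 := by simp [hφdef, inv_mul_cancel₀ hφ₀]
    -- contraction on first factor
    set Ψ : V ⊗[ℂ] (V ⊗[ℂ] V) →ₗ[ℂ] V ⊗[ℂ] V :=
      (TensorProduct.lid ℂ (V ⊗[ℂ] V)).toLinearMap ∘ₗ TensorProduct.map φ LinearMap.id with hΨ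
    have hΨtmul : ∀ (x : V) (w : V ⊗[ℂ] V), Ψ (x ⊗ₜ w) = φ x • w := by
      intro x w; simp [hΨ]
    -- the candidate map
    set g : V →ₗ[ℂ] V :=
      (TensorProduct.lid ℂ V).toLinearMap ∘ₗ TensorProduct.map φ LinearMap.id ∘ₗ A ∘ₗ
        TensorProduct.mk ℂ V V v with hg
    have haux : ∀ (t : V ⊗[ℂ] V) (z : V),
        Ψ ((TensorProduct.assoc ℂ V V V) (t ⊗ₜ z)) =
          ((TensorProduct.lid ℂ V) (TensorProduct.map φ LinearMap.id t)) ⊗ₜ z := by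
      intro t z
      induction t using TensorProduct.induction_on with
      | zero => simp
      | tmul a b => simp [hΨtmul, smul_tmul']
      | add s t hs ht => simp [add_tmul, hs, ht]
    have hB : B = TensorProduct.map g LinearMap.id := by
      apply TensorProduct.ext'
      intro y z
      have h1 := congrArg Ψ (hkey v y z)
      rw [haux, hΨtmul, hφv, one_smul] at h1
      rw [← h1]
      simp [hg]
    -- contraction on last factor
    set Θ : V ⊗[ℂ] (V ⊗[ℂ] V) →ₗ[ℂ] V ⊗[ℂ] V :=
      TensorProduct.map LinearMap.id
        ((TensorProduct.rid ℂ V).toLinearMap ∘ₗ TensorProduct.map LinearMap.id φ) with hΘ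
    have haux2 : ∀ (t : V ⊗[ℂ] V) (z : V),
        Θ ((TensorProduct.assoc ℂ V V V) (t ⊗ₜ z)) = φ z • t := by
      intro t z
      induction t using TensorProduct.induction_on with
      | zero => simp
      | tmul a b => simp [hΘ, tmul_smul, smul_tmul']
      | add s t hs ht => simp [add_tmul, hs, ht, smul_add]
    have hA : A = TensorProduct.map LinearMap.id g := by
      apply TensorProduct.ext'
      intro x y
      have h1 := congrArg Θ (hkey x y v)
      rw [haux2, hφv, one_smul, hB] at h1
      rw [h1]
      simp [hΘ, hφv]
    exact ⟨g, hA, hB⟩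
end

section
/- Let V be a finite-dimensional complex vector space and suppose, for each z ∈ ℂ, R(z) is an endomorphism of V ⊗ V such that R(u)_{12} R(u+v)_{23} R(v)_{12} = R(v)_{23} R(u+v)_{12} R(u)_{23} for all u, v ∈ ℂ (the quantum Yang–Baxter equation), and R(0) = id_{V ⊗ V}. Then for every z ∈ ℂ there is a scalar c(z) ∈ ℂ such that R(z) ∘ R(−z) = R(−z) ∘ R(z) = c(z) · id_{V ⊗ V}. In particular, if R(z) is not an isomorphism, then R(z) ∘ R(−z) = 0 = R(−z) ∘ R(z). -/
open TensorProduct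

noncomputable section

variable {V : Type*} [AddCommGroup V] [Module ℂ V]

/-- `X₁₂ = X ⊗ id`, acting on the first two tensor factors of `V ⊗ V ⊗ V`. -/
def op12 (X : V ⊗[ℂ] V →ₗ[ℂ] V ⊗[ℂ] V) :
    V ⊗[ℂ] (V ⊗[ℂ] V) →ₗ[ℂ] V ⊗[ℂ] (V ⊗[ℂ] V) :=
  (TensorProduct.assoc ℂ V V V).toLinearMap ∘ₗ
    TensorProduct.map X LinearMap.id ∘ₗ (TensorProduct.assoc ℂ V V V).symm.toLinearMap

/-- `X₂₃ = id ⊗ X`, acting on the last two tensor factors of `V ⊗ V ⊗ V`. -/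
def op23 (X : V ⊗[ℂ] V →ₗ[ℂ] V ⊗[ℂ] V) :
    V ⊗[ℂ] (V ⊗[ℂ] V) →ₗ[ℂ] V ⊗[ℂ] (V ⊗[ℂ] V) :=
  TensorProduct.map LinearMap.id X

lemma op12_id : op12 (LinearMap.id : V ⊗[ℂ] V →ₗ[ℂ] V ⊗[ℂ] V) = LinearMap.id := by
  apply TensorProduct.ext'
  intro a t
  induction t using TensorProduct.induction_on with
  | zero => simp
  | tmul b c => simp [op12]
  | add x y hx hy => simp_all [tmul_add]

lemma op23_id : op23 (LinearMap.id : V ⊗[ℂ] V →ₗ[ℂ] V ⊗[ℂ] V) = LinearMap.id := by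
  simp [op23]

lemma op12_comp (X Y : V ⊗[ℂ] V →ₗ[ℂ] V ⊗[ℂ] V) :
    op12 (X ∘ₗ Y) = op12 X ∘ₗ op12 Y := by
  apply TensorProduct.ext'
  intro a t
  induction t using TensorProduct.induction_on with
  | zero => simp
  | tmul b c => simp [op12]
  | add x y hx hy => simp_all [tmul_add]

lemma op23_comp (X Y : V ⊗[ℂ] V →ₗ[ℂ] V ⊗[ℂ] V) :
    op23 (X ∘ₗ Y) = op23 X ∘ₗ op23 Y := by
  simp [op23, ← TensorProduct.map_comp]

lemma op12_apply (X : V ⊗[ℂ] V →ₗ[ℂ] V ⊗[ℂ] V) (a b c : V) :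
    op12 X (a ⊗ₜ[ℂ] (b ⊗ₜ[ℂ] c)) = (TensorProduct.assoc ℂ V V V) (X (a ⊗ₜ b) ⊗ₜ c) := by
  simp [op12]


variable {W : Type*} [AddCommGroup W] [Module ℂ W]

/-- Contraction `x ⊗ y ↦ φ(x) • y`. -/
def contrL (φ : V →ₗ[ℂ] ℂ) : V ⊗[ℂ] W →ₗ[ℂ] W :=
  (TensorProduct.lid ℂ W).toLinearMap ∘ₗ TensorProduct.map φ LinearMap.id

/-- Contraction `x ⊗ y ↦ φ(y) • x`. -/
def contrR (φ : V →ₗ[ℂ] ℂ) : W ⊗[ℂ] V →ₗ[ℂ] W :=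
  (TensorProduct.rid ℂ W).toLinearMap ∘ₗ TensorProduct.map LinearMap.id φ

@[simp] lemma contrL_tmul (φ : V →ₗ[ℂ] ℂ) (x : V) (y : W) : contrL φ (x ⊗ₜ y) = φ x • y := by
  simp [contrL]

@[simp] lemma contrR_tmul (φ : V →ₗ[ℂ] ℂ) (x : W) (y : V) : contrR φ (x ⊗ₜ y) = φ y • x := by
  simp [contrR]

lemma aux1 {φ : V →ₗ[ℂ] ℂ} {v₀ : V} (hφ : φ v₀ = 1)
    {A B : V ⊗[ℂ] V →ₗ[ℂ] V ⊗[ℂ] V} (h : op12 A = op23 B) (a b : V) :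
    A (a ⊗ₜ b) = a ⊗ₜ contrR φ (B (b ⊗ₜ v₀)) := by
  have hpt : op12 A (a ⊗ₜ (b ⊗ₜ v₀)) = a ⊗ₜ B (b ⊗ₜ v₀) := by
    rw [h]; simp [op23]
  rw [op12_apply] at hpt
  have hG : (TensorProduct.map LinearMap.id (contrR φ)) ∘ₗ
      (TensorProduct.assoc ℂ V V V).toLinearMap ∘ₗ
      ((TensorProduct.mk ℂ (V ⊗[ℂ] V) V).flip v₀) = LinearMap.id := by
    apply TensorProduct.ext'
    intro x y
    simp [hφ]
  calc A (a ⊗ₜ b)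
      = ((TensorProduct.map LinearMap.id (contrR φ)) ∘ₗ
      (TensorProduct.assoc ℂ V V V).toLinearMap ∘ₗ
      ((TensorProduct.mk ℂ (V ⊗[ℂ] V) V).flip v₀)) (A (a ⊗ₜ b)) := by rw [hG]; simp
    _ = (TensorProduct.map LinearMap.id (contrR φ))
          ((TensorProduct.assoc ℂ V V V) (A (a ⊗ₜ b) ⊗ₜ v₀)) := rfl
    _ = (TensorProduct.map LinearMap.id (contrR φ)) (a ⊗ₜ B (b ⊗ₜ v₀)) := by rw [hpt]
    _ = a ⊗ₜ contrR φ (B (b ⊗ₜ v₀)) := by simp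

lemma aux2 {φ : V →ₗ[ℂ] ℂ} {v₀ : V} (hφ : φ v₀ = 1)
    {A B : V ⊗[ℂ] V →ₗ[ℂ] V ⊗[ℂ] V} (h : op12 B = op23 A) (b c : V) :
    A (b ⊗ₜ c) = contrL φ (B (v₀ ⊗ₜ b)) ⊗ₜ c := by
  have hpt : op12 B (v₀ ⊗ₜ (b ⊗ₜ c)) = v₀ ⊗ₜ A (b ⊗ₜ c) := by
    rw [h]; simp [op23]
  rw [op12_apply] at hpt
  have hH : (contrL φ (W := V ⊗[ℂ] V)) ∘ₗ
      (TensorProduct.assoc ℂ V V V).toLinearMap ∘ₗ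
      ((TensorProduct.mk ℂ (V ⊗[ℂ] V) V).flip c) =
      ((TensorProduct.mk ℂ V V).flip c) ∘ₗ contrL φ := by
    apply TensorProduct.ext'
    intro x y
    simp [TensorProduct.smul_tmul]
  calc A (b ⊗ₜ c)
      = (contrL φ (W := V ⊗[ℂ] V)) (v₀ ⊗ₜ A (b ⊗ₜ c)) := by simp [hφ]
    _ = (contrL φ (W := V ⊗[ℂ] V))
          ((TensorProduct.assoc ℂ V V V) (B (v₀ ⊗ₜ b) ⊗ₜ c)) := by rw [hpt]
    _ = ((contrL φ (W := V ⊗[ℂ] V)) ∘ₗ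
      (TensorProduct.assoc ℂ V V V).toLinearMap ∘ₗ
      ((TensorProduct.mk ℂ (V ⊗[ℂ] V) V).flip c)) (B (v₀ ⊗ₜ b)) := rfl
    _ = contrL φ (B (v₀ ⊗ₜ b)) ⊗ₜ c := by rw [hH]; rfl

lemma key [FiniteDimensional ℂ V] {A B : V ⊗[ℂ] V →ₗ[ℂ] V ⊗[ℂ] V}
    (h1 : op12 A = op23 B) (h2 : op12 B = op23 A) :
    ∃ c : ℂ, A = c • (LinearMap.id : V ⊗[ℂ] V →ₗ[ℂ] V ⊗[ℂ] V) ∧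
      B = c • (LinearMap.id : V ⊗[ℂ] V →ₗ[ℂ] V ⊗[ℂ] V) := by
  rcases subsingleton_or_nontrivial V with hV | hV
  · have : Subsingleton (V ⊗[ℂ] V) := inferInstance
    exact ⟨0, Subsingleton.elim _ _, Subsingleton.elim _ _⟩
  · obtain ⟨v₀, hv₀⟩ := exists_ne (0 : V)
    obtain ⟨φ₀, hφ₀⟩ : ∃ φ₀ : V →ₗ[ℂ] ℂ, φ₀ v₀ ≠ 0 := by
      by_contra hall
      push_neg at hall
      exact hv₀ ((Module.forall_dual_apply_eq_zero_iff ℂ v₀).mp hall)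
    set φ : V →ₗ[ℂ] ℂ := (φ₀ v₀)⁻¹ • φ₀ with hφdef
    have hφ : φ v₀ = 1 := by simp [hφdef, inv_mul_cancel₀ hφ₀]
    have e1 := aux1 hφ h1
    have e2 := aux2 hφ h2
    set c : ℂ := φ (contrL φ (B (v₀ ⊗ₜ v₀))) with hc
    have hp : ∀ b : V, contrR φ (B (b ⊗ₜ v₀)) = c • b := by
      intro b
      have h12 : v₀ ⊗ₜ[ℂ] contrR φ (B (b ⊗ₜ v₀)) = contrL φ (B (v₀ ⊗ₜ v₀)) ⊗ₜ[ℂ] b := by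
        rw [← e1 v₀ b, e2 v₀ b]
      have := congrArg (contrL φ (W := V)) h12
      simpa [hφ] using this
    have hA : A = c • (LinearMap.id : V ⊗[ℂ] V →ₗ[ℂ] V ⊗[ℂ] V) := by
      apply TensorProduct.ext'
      intro a b
      rw [e1 a b, hp b]
      simp [tmul_smul]
    refine ⟨c, hA, ?_⟩
    apply TensorProduct.ext'
    intro a b
    rw [aux1 hφ h2 a b, hA]
    simp [tmul_smul, hφ, smul_comm]

/-- If `R : ℂ → End(V ⊗ V)` satisfies the quantum Yang-Baxter equation
`R(u)₁₂ R(u+v)₂₃ R(v)₁₂ = R(v)₂₃ R(u+v)₁₂ R(u)₂₃` and `R(0) = id`, then for every `z` there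
is a scalar `c(z)` with `R(z)R(-z) = R(-z)R(z) = c(z)·id`; in particular, if `R(z)` is not an
isomorphism then `R(z)R(-z) = 0 = R(-z)R(z)`. -/
theorem stmt2 [FiniteDimensional ℂ V]
    (R : ℂ → (V ⊗[ℂ] V →ₗ[ℂ] V ⊗[ℂ] V))
    (hQYBE : ∀ u v : ℂ,
      op12 (R u) ∘ₗ op23 (R (u + v)) ∘ₗ op12 (R v) =
        op23 (R v) ∘ₗ op12 (R (u + v)) ∘ₗ op23 (R u))
    (hR0 : R 0 = LinearMap.id) (z : ℂ) :
    (∃ c : ℂ, R z ∘ₗ R (-z) = c • (LinearMap.id : V ⊗[ℂ] V →ₗ[ℂ] V ⊗[ℂ] V) ∧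
        R (-z) ∘ₗ R z = c • (LinearMap.id : V ⊗[ℂ] V →ₗ[ℂ] V ⊗[ℂ] V)) ∧
      (¬ Function.Bijective (R z) → R z ∘ₗ R (-z) = 0 ∧ R (-z) ∘ₗ R z = 0) := by
  have h1 := hQYBE z (-z)
  have h2 := hQYBE (-z) z
  simp only [add_neg_cancel, neg_add_cancel, hR0, op12_id, op23_id, LinearMap.id_comp,
    LinearMap.comp_id, ← op12_comp, ← op23_comp] at h1 h2
  obtain ⟨c, hA, hB⟩ := key h1 h2
  refine ⟨⟨c, hA, hB⟩, fun hnb => ?_⟩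
  by_cases hc : c = 0
  · rw [hA, hB, hc, zero_smul]; exact ⟨rfl, rfl⟩
  · exfalso
    apply hnb
    have hAx : ∀ x, R z (R (-z) x) = c • x := fun x => LinearMap.congr_fun hA x
    have hBx : ∀ x, R (-z) (R z x) = c • x := fun x => LinearMap.congr_fun hB x
    constructor
    · intro x y hxy
      have : c • x = c • y := by rw [← hBx x, ← hBx y, hxy]
      exact smul_right_injective _ hc this
    · intro y
      refine ⟨c⁻¹ • R (-z) y, ?_⟩
      rw [map_smul, hAx, smul_smul, inv_mul_cancel₀ hc, one_smul]

end
end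

section
/- Let D ⊆ ℂ be an open connected set, V a finite-dimensional complex vector space, and A : D → End(V) a holomorphic map (i.e., all matrix entries with respect to a fixed basis are holomorphic). Then for every p ∈ D, the order of vanishing of the holomorphic function z ↦ det A(z) at p is at least the dimension of the kernel of A(p). (If det A vanishes identically near p the order is interpreted as +∞.) -/
/-! In a basis of `ℂⁿ` whose first `k = dim ker A(p)` vectors span `ker A(p)`, the matrix of
`A(z)` has the same determinant as `A(z)`, and its first `k` columns vanish at `p`. Each such
column is `(z - p)` times the analytic column of its difference quotients (`dslope`), so
multilinearity of the determinant in the columns pulls out the factor `(z - p) ^ k`. -/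

open Matrix

theorem AnalyticAt.dslope {𝕜 E : Type*} [NontriviallyNormedField 𝕜] [NormedAddCommGroup E]
    [NormedSpace 𝕜 E] {f : 𝕜 → E} {p : 𝕜} (hf : AnalyticAt 𝕜 f p) :
    AnalyticAt 𝕜 (dslope f p) p :=
  let ⟨_, hq⟩ := hf
  ⟨_, hq.has_fpower_series_dslope_fslope⟩

section AnalyticEntries

variable {𝕜 E : Type*} [NontriviallyNormedField 𝕜] [NormedAddCommGroup E] [NormedSpace 𝕜 E]
  {ι : Type*} [Fintype ι] [DecidableEq ι]

theorem analyticAt_det_of_entries {M : E → Matrix ι ι 𝕜} {x : E}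
    (hM : ∀ i j, AnalyticAt 𝕜 (fun z => M z i j) x) :
    AnalyticAt 𝕜 (fun z => (M z).det) x := by
  simp_rw [det_apply']
  exact Finset.analyticAt_fun_sum _ fun σ _ =>
    analyticAt_const.mul (Finset.analyticAt_fun_prod _ fun i _ => hM (σ i) i)

theorem analyticAt_toMatrix_mulVecLin_apply [CompleteSpace 𝕜] {n : Type*} [Fintype n]
    [DecidableEq n] (b : Module.Basis ι 𝕜 (n → 𝕜)) {A : E → Matrix n n 𝕜} {x : E}
    (hA : ∀ i j, AnalyticAt 𝕜 (fun z => A z i j) x) (i j : ι) :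
    AnalyticAt 𝕜 (fun z => LinearMap.toMatrix b b (A z).mulVecLin i j) x := by
  have hv : AnalyticAt 𝕜 (fun z => A z *ᵥ b j) x := AnalyticAt.pi fun l =>
    Finset.analyticAt_fun_sum _ fun m _ => (hA l m).mul analyticAt_const
  simpa only [LinearMap.toMatrix_apply, mulVecLin_apply, Function.comp_def,
      LinearMap.coe_toContinuousLinearMap', Module.Basis.coord_apply] using
    ((LinearMap.toContinuousLinearMap (b.coord i)).analyticAt _).comp hv

theorem exists_det_eq_sub_pow_card_mul_of_col_eq_zero {M : 𝕜 → Matrix ι ι 𝕜} {p : 𝕜}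
    (hM : ∀ i j, AnalyticAt 𝕜 (fun z => M z i j) p) (S : Finset ι)
    (hS : ∀ j ∈ S, ∀ i, M p i j = 0) :
    ∃ g : 𝕜 → 𝕜, AnalyticAt 𝕜 g p ∧ ∀ z, (M z).det = (z - p) ^ S.card * g z := by
  let N : 𝕜 → Matrix ι ι 𝕜 := fun z => of fun i j =>
    if j ∈ S then dslope (fun w => M w i j) p z else M z i j
  have hN : ∀ i j, AnalyticAt 𝕜 (fun z => N z i j) p := by
    intro i j
    by_cases hj : j ∈ S
    · simpa only [N, of_apply, if_pos hj] using (hM i j).dslope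
    · simpa only [N, of_apply, if_neg hj] using hM i j
  refine ⟨fun z => (N z).det, analyticAt_det_of_entries hN, fun z => ?_⟩
  have hcols : M z = of fun i j => (if j ∈ S then z - p else 1) * N z i j := by
    ext i j
    by_cases hj : j ∈ S
    · simpa [N, hj, hS j hj i] using (sub_smul_dslope (fun w => M w i j) p z).symm
    · simp [N, hj]
  rw [hcols, det_mul_row, Fintype.prod_ite_mem, Finset.prod_const]

end AnalyticEntries

theorem Submodule.exists_basis_sum_inl_mem {K V : Type*} [DivisionRing K] [AddCommGroup V]
    [Module K V] [FiniteDimensional K V] (U : Submodule K V) :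
    ∃ (m : ℕ) (b : Module.Basis (Fin (Module.finrank K U) ⊕ Fin m) K V),
      ∀ j, b (.inl j) ∈ U := by
  obtain ⟨W, hUW⟩ := U.exists_isCompl
  refine ⟨_, ((Module.finBasis K U).prod (Module.finBasis K W)).map
    (U.prodEquivOfIsCompl W hUW), fun j => ?_⟩
  simp

theorem stmt4_general (n : ℕ) (D : Set ℂ) (hD : IsOpen D)
    (A : ℂ → Matrix (Fin n) (Fin n) ℂ)
    (hA : ∀ i j, DifferentiableOn ℂ (fun z => A z i j) D)
    (p : ℂ) (hp : p ∈ D) :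
    ∃ g : ℂ → ℂ, AnalyticAt ℂ g p ∧
      ∀ᶠ z in nhds p,
        (A z).det = (z - p) ^ Module.finrank ℂ (LinearMap.ker (A p).mulVecLin) * g z := by
  obtain ⟨m, b, hb⟩ := (LinearMap.ker (A p).mulVecLin).exists_basis_sum_inl_mem
  let M z := LinearMap.toMatrix b b (A z).mulVecLin
  have hMdet : ∀ z, (M z).det = (A z).det := fun z => by
    rw [LinearMap.det_toMatrix, ← Matrix.toLin'_apply', LinearMap.det_toLin']
  have hMa := analyticAt_toMatrix_mulVecLin_apply b
    fun i j => (hA i j).analyticAt (hD.mem_nhds hp)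
  have hker : ∀ j ∈ Finset.univ.map .inl, ∀ i, M p i j = 0 := by
    simp only [Finset.mem_map, Finset.mem_univ, true_and, forall_exists_index]
    rintro _ j rfl i
    simp [M, LinearMap.toMatrix_apply, LinearMap.mem_ker.mp (hb j)]
  obtain ⟨g, hg, hdet⟩ := exists_det_eq_sub_pow_card_mul_of_col_eq_zero hMa _ hker
  refine ⟨g, hg, .of_forall fun z => ?_⟩
  rw [← hMdet, hdet, Finset.card_map, Finset.card_univ, Fintype.card_fin]

/-- For a holomorphic family `A : D → End(ℂⁿ)` on an open connected set `D`, the order of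
vanishing of `det A(z)` at `p ∈ D` is at least `dim ker A(p)`; i.e. `det A(z)` can be written
near `p` as `(z - p) ^ (dim ker A(p))` times a function analytic at `p`. -/
theorem stmt4 (n : ℕ) (D : Set ℂ) (hD : IsOpen D) (hconn : IsConnected D)
    (A : ℂ → Matrix (Fin n) (Fin n) ℂ)
    (hA : ∀ i j, DifferentiableOn ℂ (fun z => A z i j) D)
    (p : ℂ) (hp : p ∈ D) :
    ∃ g : ℂ → ℂ, AnalyticAt ℂ g p ∧
      ∀ᶠ z in nhds p,
        (A z).det = (z - p) ^ Module.finrank ℂ (LinearMap.ker (A p).mulVecLin) * g z :=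
  stmt4_general n D hD A hA p hp
end

section
/- Let d ≥ 2 and for 1 ≤ j ≤ d−1 let s_j ∈ S_d denote the adjacent transposition (j, j+1). Embed S_{d−1} in S_d as the permutations fixing d. Then in the group algebra ℂ[S_d], (1 + 1·s_1)(1 + 2·s_2) ⋯ (1 + (d−1)·s_{d−1}) · (Σ_{σ ∈ S_{d−1}} σ) = (d−1)! · Σ_{σ ∈ S_d} σ. -/
open scoped Classical

namespace Stmt11Aux

noncomputable def B (n : ℕ) (k : Fin (n+1)) : MonoidAlgebra ℂ (Equiv.Perm (Fin (n+1))) :=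
  ∑ σ ∈ Finset.univ.filter (fun σ : Equiv.Perm (Fin (n+1)) => σ (Fin.last n) = k),
    MonoidAlgebra.of ℂ (Equiv.Perm (Fin (n+1))) σ

lemma mulB (n : ℕ) (g : Equiv.Perm (Fin (n+1))) (k : Fin (n+1)) :
    MonoidAlgebra.of ℂ (Equiv.Perm (Fin (n+1))) g * B n k = B n (g k) := by
  unfold B
  rw [Finset.mul_sum]
  refine Finset.sum_nbij' (fun σ => g * σ) (fun τ => g⁻¹ * τ) ?_ ?_ ?_ ?_ ?_
  · intro a ha
    simp only [Finset.mem_filter, Finset.mem_univ, true_and] at ha ⊢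
    simp [ha]
  · intro a ha
    simp only [Finset.mem_filter, Finset.mem_univ, true_and] at ha ⊢
    simp [ha]
  · intro a _; group
  · intro a _; group
  · intro a _; simp [map_mul]

noncomputable def Bn (n i : ℕ) : MonoidAlgebra ℂ (Equiv.Perm (Fin (n+1))) :=
  B n ⟨i % (n+1), Nat.mod_lt _ n.succ_pos⟩

noncomputable def sw (n j : ℕ) : Equiv.Perm (Fin (n+1)) :=
  Equiv.swap ⟨j % (n+1), Nat.mod_lt _ n.succ_pos⟩ ⟨(j+1) % (n+1), Nat.mod_lt _ n.succ_pos⟩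

noncomputable def F (n j : ℕ) : MonoidAlgebra ℂ (Equiv.Perm (Fin (n+1))) :=
  1 + ((j+1 : ℕ) : ℂ) • MonoidAlgebra.of ℂ (Equiv.Perm (Fin (n+1))) (sw n j)

lemma sw_Bn (n j i : ℕ) (hj : j + 1 ≤ n) (hi : i ≤ n) :
    MonoidAlgebra.of ℂ (Equiv.Perm (Fin (n+1))) (sw n j) * Bn n i =
      if i = j then Bn n (j+1) else if i = j+1 then Bn n j else Bn n i := by
  have hj1 : j % (n+1) = j := Nat.mod_eq_of_lt (by omega)
  have hj2 : (j+1) % (n+1) = j + 1 := Nat.mod_eq_of_lt (by omega)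
  have hi1 : i % (n+1) = i := Nat.mod_eq_of_lt (by omega)
  rw [Bn, mulB, sw]
  by_cases h1 : i = j
  · rw [if_pos h1]
    have e1 : (⟨i % (n+1), Nat.mod_lt _ n.succ_pos⟩ : Fin (n+1)) =
        ⟨j % (n+1), Nat.mod_lt _ n.succ_pos⟩ := Fin.ext (by simp [hi1, hj1, h1])
    rw [e1, Equiv.swap_apply_left]; rfl
  · rw [if_neg h1]
    by_cases h2 : i = j + 1
    · rw [if_pos h2]
      have e1 : (⟨i % (n+1), Nat.mod_lt _ n.succ_pos⟩ : Fin (n+1)) =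
          ⟨(j+1) % (n+1), Nat.mod_lt _ n.succ_pos⟩ := Fin.ext (by simp [hi1, hj2, h2])
      rw [e1, Equiv.swap_apply_right]; rfl
    · rw [if_neg h2, Equiv.swap_apply_of_ne_of_ne
        (Fin.ne_of_val_ne (show i % (n+1) ≠ j % (n+1) by rw [hi1, hj1]; exact h1))
        (Fin.ne_of_val_ne (show i % (n+1) ≠ (j+1) % (n+1) by rw [hi1, hj2]; exact h2))]



def c (n m : ℕ) : ℕ := ∏ i ∈ Finset.Ico (m+2) (n+1), i

lemma key (n : ℕ) : ∀ k, k < n →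
    (List.ofFn (fun j : Fin (k+1) => F n ((n-1-k) + (j : ℕ)))).prod * Bn n n
      = (c n (n-1-k) : ℂ) • (∑ i ∈ Finset.Icc (n-k) n, Bn n i)
        + (((n-k) * c n (n-1-k) : ℕ) : ℂ) • Bn n (n-1-k) := by
  intro k
  induction k with
  | zero =>
    intro hn
    have e1 : n - 1 + 1 = n := by omega
    simp only [List.ofFn_succ, List.ofFn_zero, List.prod_cons, List.prod_nil, mul_one,
      Fin.val_zero, add_zero, Nat.sub_zero]
    rw [F, add_mul, one_mul, smul_mul_assoc,
      sw_Bn n (n-1) n (by omega) le_rfl, if_neg (by omega), if_pos e1.symm]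
    have hc : c n (n-1) = 1 := by
      rw [c, show n - 1 + 2 = n + 1 by omega, Finset.Ico_self, Finset.prod_empty]
    rw [hc, Finset.Icc_self, Finset.sum_singleton, e1]
    push_cast
    module
  | succ k ih =>
    intro hk1
    have hk : k < n := by omega
    set m := n - 1 - (k+1) with hm
    have h1 : n - 1 - k = m + 1 := by omega
    have h2 : n - k = m + 2 := by omega
    have h3 : n - (k+1) = m + 1 := by omega
    have hmn : m + 1 ≤ n := by omega
    have IH := ih hk
    rw [h1, h2] at IH
    have hsplit : (List.ofFn (fun j : Fin (k+1+1) => F n (m + (j : ℕ)))).prod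
        = F n m * (List.ofFn (fun j : Fin (k+1) => F n ((m+1) + (j : ℕ)))).prod := by
      have htl : (List.ofFn (fun j : Fin (k+1) => F n ((m+1) + (j:ℕ))))
          = List.ofFn (fun j : Fin (k+1) => F n (m + ((j.succ : Fin (k+1+1)) : ℕ))) := by
        refine congrArg _ (funext fun j => congrArg (F n) ?_)
        rw [Fin.val_succ]
        omega
      rw [htl]
      conv_lhs => rw [List.ofFn_succ]
      rw [List.prod_cons]
      refine congrArg (· * _) (congrArg (F n) ?_)
      simp
    rw [hsplit, mul_assoc, IH, h3]
    have hswS : MonoidAlgebra.of ℂ (Equiv.Perm (Fin (n+1))) (sw n m) *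
        (∑ i ∈ Finset.Icc (m+2) n, Bn n i) = ∑ i ∈ Finset.Icc (m+2) n, Bn n i := by
      rw [Finset.mul_sum]
      refine Finset.sum_congr rfl fun i hi => ?_
      simp only [Finset.mem_Icc] at hi
      rw [sw_Bn n m i hmn hi.2, if_neg (by omega), if_neg (by omega)]
    have hswB : MonoidAlgebra.of ℂ (Equiv.Perm (Fin (n+1))) (sw n m) * Bn n (m+1)
        = Bn n m := by
      rw [sw_Bn n m (m+1) hmn (by omega), if_neg (by omega), if_pos rfl]
    have hIcc : Finset.Icc (m+1) n = insert (m+1) (Finset.Icc (m+2) n) := by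
      ext x
      simp only [Finset.mem_Icc, Finset.mem_insert]
      omega
    have hc : c n m = (m+2) * c n (m+1) := by
      rw [c, Finset.prod_eq_prod_Ico_succ_bot (show m+2 < n+1 by omega)]
      rfl
    rw [F, add_mul, one_mul, smul_mul_assoc, mul_add, mul_smul_comm, mul_smul_comm,
      hswS, hswB, hIcc, Finset.sum_insert (by simp), hc]
    push_cast
    module

lemma sum_Bn (n : ℕ) : ∑ i ∈ Finset.range (n+1), Bn n i
    = ∑ σ : Equiv.Perm (Fin (n+1)), MonoidAlgebra.of ℂ (Equiv.Perm (Fin (n+1))) σ := by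
  rw [← Finset.sum_fiberwise_of_maps_to
    (g := fun σ : Equiv.Perm (Fin (n+1)) => ((σ (Fin.last n) : ℕ)))
    (t := Finset.range (n+1))
    (fun σ _ => Finset.mem_range.mpr (σ (Fin.last n)).isLt)]
  refine Finset.sum_congr rfl fun i hi => ?_
  rw [Finset.mem_range] at hi
  rw [Bn, B]
  refine Finset.sum_congr ?_ fun _ _ => rfl
  ext σ
  simp only [Finset.mem_filter, Finset.mem_univ, true_and]
  rw [Fin.ext_iff]
  simp [Nat.mod_eq_of_lt (by omega : i < n + 1)]

lemma hc0 (e : ℕ) : c (e+1) 0 = (e+1).factorial := by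
  have h := Finset.prod_eq_prod_Ico_succ_bot (show (1:ℕ) < e+2 by omega) (fun x => x)
  rw [Finset.prod_Ico_id_eq_factorial] at h
  rw [show c (e+1) 0 = ∏ i ∈ Finset.Ico 2 (e+2), i from rfl, h, one_mul]

end Stmt11Aux




open scoped Classical in
/-- In `ℂ[S_d]` (`d ≥ 2`), with `s_j` the adjacent transposition `(j, j+1)` (here `0`-indexed:
`s_j` swaps positions `j-1` and `j`), one has
`(1 + 1·s₁)(1 + 2·s₂)⋯(1 + (d−1)·s_{d−1}) · (Σ_{σ ∈ S_{d−1}} σ) = (d−1)! · Σ_{σ ∈ S_d} σ`,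
where `S_{d−1} ⊂ S_d` is the stabilizer of the last letter. -/
theorem stmt11 (d : ℕ) (hd : 2 ≤ d) :
    (List.ofFn (fun j : Fin (d - 1) =>
        (1 : MonoidAlgebra ℂ (Equiv.Perm (Fin d))) +
          (((j : ℕ) + 1 : ℕ) : ℂ) •
            MonoidAlgebra.of ℂ (Equiv.Perm (Fin d))
              (Equiv.swap (⟨(j : ℕ), by have := j.isLt; omega⟩ : Fin d)
                (⟨(j : ℕ) + 1, by have := j.isLt; omega⟩ : Fin d)))).prod *
      (∑ σ ∈ Finset.univ.filter (fun σ : Equiv.Perm (Fin d) =>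
          σ (⟨d - 1, by omega⟩ : Fin d) = (⟨d - 1, by omega⟩ : Fin d)),
        MonoidAlgebra.of ℂ (Equiv.Perm (Fin d)) σ) =
      ((d - 1).factorial : ℂ) •
        ∑ σ : Equiv.Perm (Fin d), MonoidAlgebra.of ℂ (Equiv.Perm (Fin d)) σ := by
  obtain ⟨e, rfl⟩ : ∃ e, d = e + 2 := ⟨d - 2, by omega⟩
  have hlt1 : ∀ j : Fin (e+1), (j : ℕ) < e + 2 := fun j => by have := j.isLt; omega
  have hlt2 : ∀ j : Fin (e+1), (j : ℕ) + 1 < e + 2 := fun j => by have := j.isLt; omega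
  have hpf : e + 1 < e + 2 := by omega
  show (List.ofFn (fun j : Fin (e+1) =>
      (1 : MonoidAlgebra ℂ (Equiv.Perm (Fin (e+2)))) +
        (((j : ℕ) + 1 : ℕ) : ℂ) • MonoidAlgebra.of ℂ (Equiv.Perm (Fin (e+2)))
          (Equiv.swap (⟨(j : ℕ), hlt1 j⟩ : Fin (e+2)) (⟨(j : ℕ) + 1, hlt2 j⟩ : Fin (e+2))))).prod *
      (∑ σ ∈ Finset.univ.filter (fun σ : Equiv.Perm (Fin (e+2)) =>
          σ (⟨e+1, hpf⟩ : Fin (e+2)) = (⟨e+1, hpf⟩ : Fin (e+2))),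
        MonoidAlgebra.of ℂ (Equiv.Perm (Fin (e+2))) σ) =
      (((e+1).factorial : ℕ) : ℂ) •
        ∑ σ : Equiv.Perm (Fin (e+2)), MonoidAlgebra.of ℂ (Equiv.Perm (Fin (e+2))) σ
  have hfuns : (fun j : Fin (e+1) =>
      (1 : MonoidAlgebra ℂ (Equiv.Perm (Fin (e+2)))) +
        (((j : ℕ) + 1 : ℕ) : ℂ) • MonoidAlgebra.of ℂ (Equiv.Perm (Fin (e+2)))
          (Equiv.swap (⟨(j : ℕ), hlt1 j⟩ : Fin (e+2)) (⟨(j : ℕ) + 1, hlt2 j⟩ : Fin (e+2))))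
      = fun j : Fin (e+1) => Stmt11Aux.F (e+1) (0 + (j : ℕ)) := by
    funext j
    have hsw : Stmt11Aux.sw (e+1) (j : ℕ)
        = Equiv.swap (⟨(j : ℕ), hlt1 j⟩ : Fin (e+2)) (⟨(j : ℕ) + 1, hlt2 j⟩ : Fin (e+2)) := by
      rw [Stmt11Aux.sw]
      congr 1
      · exact Fin.ext (Nat.mod_eq_of_lt (hlt1 j))
      · exact Fin.ext (Nat.mod_eq_of_lt (hlt2 j))
    rw [Stmt11Aux.F, Nat.zero_add, hsw]
  have hB : (∑ σ ∈ Finset.univ.filter (fun σ : Equiv.Perm (Fin (e+2)) =>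
          σ (⟨e+1, hpf⟩ : Fin (e+2)) = (⟨e+1, hpf⟩ : Fin (e+2))),
        MonoidAlgebra.of ℂ (Equiv.Perm (Fin (e+2))) σ) = Stmt11Aux.Bn (e+1) (e+1) := by
    rw [Stmt11Aux.Bn, Stmt11Aux.B]
    have hfin : (⟨(e+1) % (e+1+1), Nat.mod_lt _ (e+1).succ_pos⟩ : Fin (e+2))
        = (⟨e+1, hpf⟩ : Fin (e+2)) := Fin.ext (Nat.mod_eq_of_lt (by omega))
    rw [hfin]
    rfl
  have hkey := Stmt11Aux.key (e+1) e (by omega)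
  rw [show e+1-1-e = 0 by omega, show e+1-e = 1 by omega, one_mul] at hkey
  rw [hfuns, hB, hkey, ← Stmt11Aux.sum_Bn]
  have hins : Finset.range (e+1+1) = insert 0 (Finset.Icc 1 (e+1)) := by
    ext x
    simp only [Finset.mem_range, Finset.mem_insert, Finset.mem_Icc]
    omega
  rw [hins, Finset.sum_insert (by simp), Stmt11Aux.hc0]
  module
end

section
/- Let V be a finite-dimensional complex vector space, D ⊆ ℂ a domain, A : D → End(V) holomorphic, and p ∈ D. Define A_m(z) := A(z)/(z−p)^m on the kernels iteratively: λ_0 := dim ker A(p), and for m ≥ 1, λ_m := dim ker (A_m(p)|_{ker A_{m−1}(p)}), where A_{m}(p) is defined when A restricted appropriately vanishes to order m at p. Then the order of vanishing of det A(z) at p is at least λ_0 + λ_1 + λ_2 + ⋯ (the size of the singularity partition of A at p). -/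
/-!
Let `K_k` be the space of vectors `v` for which `A(z) v` vanishes to order at least `k` at `p`,
so that `K_0 ⊇ K_1 ⊇ ⋯` and `λ_m = dim K_{m+1}`. Choose a basis `b` of `ℂⁿ` adapted to the chain
`K_0 ⊇ ⋯ ⊇ K_M` and let `o_j` be the largest `k ≤ M` with `b_j ∈ K_k`. Then
`A(z) b_j = (z - p)^{o_j} G_j(z)` with `G_j` analytic, so by multilinearity of the determinant
`det A(z) = (z - p)^{Σ o_j} · det_b (G_1(z), …, G_n(z))`. Adaptedness gives
`dim K_{m+1} ≤ #{j | b_j ∈ K_{m+1}}`, and summing over `m < M` bounds `λ_0 + ⋯ + λ_{M-1}`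
by `Σ o_j`.
-/

open Filter Module Submodule Topology

noncomputable section

theorem card_filter_range_le_findGreatest (P : ℕ → Prop) [DecidablePred P] (M : ℕ) :
    ((Finset.range M).filter fun m => P (m + 1)).card ≤ Nat.findGreatest P M := by
  calc ((Finset.range M).filter fun m => P (m + 1)).card
      ≤ (Finset.range (Nat.findGreatest P M)).card := by
        refine Finset.card_le_card fun m hm => ?_
        rw [Finset.mem_filter, Finset.mem_range] at hm
        exact Finset.mem_range.2 (Nat.le_findGreatest hm.1 hm.2)
    _ = Nat.findGreatest P M := Finset.card_range _

section AdaptedBasis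

variable {K V : Type*} [Field K] [AddCommGroup V] [Module K V]

theorem exists_linearIndepOn_adapted (W : ℕ → Submodule K V) (hW : Antitone W) (N : ℕ) :
    ∃ S : Set V, LinearIndepOn K id S ∧ span K S = W 0 ∧
      ∀ m ≤ N, W m ≤ span K (S ∩ W m) := by
  induction N generalizing W with
  | zero =>
    obtain ⟨S, hSW, hSspan, hli⟩ := exists_linearIndependent K (W 0 : Set V)
    have hspan : span K S = W 0 := hSspan.trans (span_eq _)
    refine ⟨S, hli, hspan, fun m hm => ?_⟩
    obtain rfl : m = 0 := Nat.le_zero.1 hm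
    rw [Set.inter_eq_left.2 hSW, hspan]
  | succ N ih =>
    obtain ⟨S, hSli, hSspan, hSW⟩ :=
      ih (W ∘ Nat.succ) (hW.comp_monotone fun _ _ => Nat.succ_le_succ)
    have hS0 : S ⊆ W 0 := subset_span.trans (hSspan.trans_le (hW (Nat.zero_le 1)))
    obtain ⟨T, hTW, hST, hWT, hTli⟩ := exists_linearIndepOn_id_extension hSli hS0
    have hTspan : span K T = W 0 := le_antisymm (span_le.2 hTW) fun _ hx => hWT hx
    refine ⟨T, hTli, hTspan, fun m hm => ?_⟩
    cases m with
    | zero => rw [Set.inter_eq_left.2 hTW, hTspan]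
    | succ m => exact (hSW m (by omega)).trans (span_mono (Set.inter_subset_inter_left _ hST))

theorem sum_finrank_le_sum_findGreatest (W : ℕ → Submodule K V)
    [∀ v, DecidablePred (v ∈ W ·)] (S : Finset V) (M : ℕ)
    (hS : ∀ m ≤ M, W m ≤ span K (S ∩ W m)) :
    ∑ m ∈ Finset.range M, finrank K (W (m + 1)) ≤
      ∑ v ∈ S, Nat.findGreatest (fun k => v ∈ W k) M := by
  have hfinrank : ∀ m < M, finrank K (W (m + 1)) ≤ (S.filter (· ∈ W (m + 1))).card := by
    intro m hm
    have hle : W (m + 1) ≤ span K (S.filter (· ∈ W (m + 1)) : Set V) := by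
      rw [Finset.coe_filter]
      exact hS (m + 1) hm
    exact (finrank_mono hle).trans (finrank_span_finset_le_card _)
  calc ∑ m ∈ Finset.range M, finrank K (W (m + 1))
      ≤ ∑ m ∈ Finset.range M, (S.filter (· ∈ W (m + 1))).card :=
        Finset.sum_le_sum fun m hm => hfinrank m (Finset.mem_range.1 hm)
    _ = ∑ v ∈ S, ((Finset.range M).filter fun m => v ∈ W (m + 1)).card := by
        simp only [Finset.card_filter]
        exact Finset.sum_comm
    _ ≤ ∑ v ∈ S, Nat.findGreatest (fun k => v ∈ W k) M :=
        Finset.sum_le_sum fun v _ => card_filter_range_le_findGreatest (v ∈ W ·) M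

end AdaptedBasis

theorem Module.Basis.det_eq_prod_mul_det {ι R M : Type*} [CommRing R] [AddCommGroup M]
    [Module R M] [Fintype ι] [DecidableEq ι] (b : Basis ι R M) (f : M →ₗ[R] M) (c : ι → R)
    (w : ι → M) (h : ∀ i, f (b i) = c i • w i) : LinearMap.det f = (∏ i, c i) * b.det w := by
  calc LinearMap.det f = b.det (f ∘ b) := by rw [b.det_comp, b.det_self, mul_one]
    _ = b.det fun i => c i • w i := congrArg b.det (funext h)
    _ = (∏ i, c i) * b.det w := b.det.map_smul_univ c w

section Analytic

variable {𝕜 : Type*} [NontriviallyNormedField 𝕜] {ι : Type*} [Fintype ι] [DecidableEq ι]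

theorem AnalyticAt.matrix_det {E : Type*} [NormedAddCommGroup E] [NormedSpace 𝕜 E]
    {M : E → Matrix ι ι 𝕜} {x : E} (h : ∀ i j, AnalyticAt 𝕜 (fun z => M z i j) x) :
    AnalyticAt 𝕜 (fun z => (M z).det) x := by
  simp only [Matrix.det_apply, Units.smul_def, zsmul_eq_mul]
  fun_prop

theorem AnalyticAt.basis_det [CompleteSpace 𝕜] {V : Type*} [NormedAddCommGroup V]
    [NormedSpace 𝕜 V] [FiniteDimensional 𝕜 V] (b : Basis ι 𝕜 V) {G : ι → 𝕜 → V} {x : 𝕜}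
    (hG : ∀ i, AnalyticAt 𝕜 (G i) x) : AnalyticAt 𝕜 (fun z => b.det fun i => G i z) x := by
  simp only [Basis.det_apply]
  refine AnalyticAt.matrix_det fun i j => ?_
  exact (LinearMap.toContinuousLinearMap (b.coord i)).analyticAt _ |>.comp (hG j)

end Analytic

section Vanishing

variable {𝕜 : Type*} [NontriviallyNormedField 𝕜] {ι κ : Type*} [Fintype κ]

/-- `λ_m = finrank (vanishingSubmodule A p (m + 1))` is the singularity partition of `A` at `p`. -/
def vanishingSubmodule (A : 𝕜 → Matrix ι κ 𝕜) (p : 𝕜) (k : ℕ) : Submodule 𝕜 (κ → 𝕜) where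
  carrier := {v | ∀ i, ∃ g : 𝕜 → 𝕜, AnalyticAt 𝕜 g p ∧
    ∀ᶠ z in 𝓝 p, (A z).mulVec v i = (z - p) ^ k * g z}
  zero_mem' _ := ⟨0, analyticAt_const, by simp⟩
  add_mem' {v w} hv hw i := by
    obtain ⟨g, hg, hvg⟩ := hv i
    obtain ⟨h, hh, hwh⟩ := hw i
    refine ⟨g + h, hg.add hh, ?_⟩
    filter_upwards [hvg, hwh] with z hvz hwz
    simp only [Matrix.mulVec_add, Pi.add_apply, hvz, hwz, mul_add]
  smul_mem' c v hv i := by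
    obtain ⟨g, hg, hvg⟩ := hv i
    refine ⟨fun z => c * g z, analyticAt_const.mul hg, ?_⟩
    filter_upwards [hvg] with z hvz
    simp only [Matrix.mulVec_smul, Pi.smul_apply, smul_eq_mul, hvz]
    ring

variable {A : 𝕜 → Matrix ι κ 𝕜} {p : 𝕜}

theorem finrank_span_setOf_eq_finrank_vanishingSubmodule (k : ℕ) :
    finrank 𝕜 (span 𝕜 {v | ∀ i, ∃ g : 𝕜 → 𝕜, AnalyticAt 𝕜 g p ∧
      ∀ᶠ z in 𝓝 p, (A z).mulVec v i = (z - p) ^ k * g z}) =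
      finrank 𝕜 (vanishingSubmodule A p k) :=
  congrArg (fun K : Submodule 𝕜 (κ → 𝕜) => finrank 𝕜 K) (span_eq (vanishingSubmodule A p k))

theorem vanishingSubmodule_succ_le (k : ℕ) :
    vanishingSubmodule A p (k + 1) ≤ vanishingSubmodule A p k := by
  intro v hv i
  obtain ⟨g, hg, hvg⟩ := hv i
  refine ⟨fun z => (z - p) * g z, (analyticAt_id.sub analyticAt_const).mul hg, ?_⟩
  filter_upwards [hvg] with z hvz
  rw [hvz]
  ring

theorem vanishingSubmodule_antitone : Antitone (vanishingSubmodule A p) :=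
  antitone_nat_of_succ_le vanishingSubmodule_succ_le

theorem vanishingSubmodule_zero (hA : ∀ i j, AnalyticAt 𝕜 (fun z => A z i j) p) :
    vanishingSubmodule A p 0 = ⊤ := by
  refine eq_top_iff.2 fun v _ i => ⟨fun z => (A z).mulVec v i, ?_, by simp⟩
  simp only [Matrix.mulVec, dotProduct]
  fun_prop

theorem exists_analyticAt_mulVec_eq_pow_smul [Fintype ι] {v : κ → 𝕜} {k : ℕ}
    (hv : v ∈ vanishingSubmodule A p k) :
    ∃ G : 𝕜 → ι → 𝕜, AnalyticAt 𝕜 G p ∧ ∀ᶠ z in 𝓝 p, (A z).mulVec v = (z - p) ^ k • G z := by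
  choose g hg hvg using hv
  refine ⟨fun z i => g i z, analyticAt_pi_iff.2 hg, ?_⟩
  filter_upwards [eventually_all.2 hvg] with z hz
  exact funext hz

end Vanishing

theorem exists_analyticAt_det_eq_pow_mul {𝕜 : Type*} [NontriviallyNormedField 𝕜]
    [CompleteSpace 𝕜] {ι β : Type*} [Fintype ι] [DecidableEq ι] [Fintype β] [DecidableEq β]
    {A : 𝕜 → Matrix ι ι 𝕜} {p : 𝕜} (b : Basis β 𝕜 (ι → 𝕜)) (o : β → ℕ)
    (hb : ∀ j, b j ∈ vanishingSubmodule A p (o j)) {d : ℕ} (hd : d ≤ ∑ j, o j) :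
    ∃ g : 𝕜 → 𝕜, AnalyticAt 𝕜 g p ∧ ∀ᶠ z in 𝓝 p, (A z).det = (z - p) ^ d * g z := by
  choose G hG hAG using fun j => exists_analyticAt_mulVec_eq_pow_smul (hb j)
  refine ⟨fun z => (z - p) ^ (∑ j, o j - d) * b.det fun j => G j z,
    ((analyticAt_id.sub analyticAt_const).pow _).mul (AnalyticAt.basis_det b hG), ?_⟩
  filter_upwards [eventually_all.2 hAG] with z hz
  calc (A z).det = LinearMap.det (Matrix.toLin' (A z)) := (LinearMap.det_toLin' _).symm
    _ = (∏ j, (z - p) ^ o j) * b.det fun j => G j z :=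
        b.det_eq_prod_mul_det _ _ _ fun j => by rw [Matrix.toLin'_apply, hz j]
    _ = (z - p) ^ d * ((z - p) ^ (∑ j, o j - d) * b.det fun j => G j z) := by
        rw [Finset.prod_pow_eq_pow_sum, ← mul_assoc, ← pow_add, Nat.add_sub_cancel' hd]

theorem stmt18_general (n : ℕ) (D : Set ℂ) (hD : IsOpen D)
    (A : ℂ → Matrix (Fin n) (Fin n) ℂ)
    (hA : ∀ i j, DifferentiableOn ℂ (fun z => A z i j) D)
    (p : ℂ) (hp : p ∈ D) (M : ℕ) :
    ∃ g : ℂ → ℂ, AnalyticAt ℂ g p ∧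
      ∀ᶠ z in nhds p, (A z).det =
        (z - p) ^ (∑ m ∈ Finset.range M, Module.finrank ℂ
            ↥(Submodule.span ℂ {v : Fin n → ℂ | ∀ i : Fin n,
              ∃ g' : ℂ → ℂ, AnalyticAt ℂ g' p ∧
                ∀ᶠ z in nhds p, (A z).mulVec v i = (z - p) ^ (m + 1) * g' z})) * g z := by
  classical
  have hAp : ∀ i j, AnalyticAt ℂ (fun z => A z i j) p :=
    fun i j => (hA i j).analyticAt (hD.mem_nhds hp)
  have hK0 := vanishingSubmodule_zero hAp
  simp only [finrank_span_setOf_eq_finrank_vanishingSubmodule]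
  obtain ⟨S, hSli, hSspan, hSW⟩ :=
    exists_linearIndepOn_adapted _ (vanishingSubmodule_antitone (A := A) (p := p)) M
  lift S to Finset (Fin n → ℂ) using hSli.linearIndependent.setFinite
  let b : Basis S ℂ (Fin n → ℂ) :=
    Basis.mk hSli.linearIndependent (by simp [hSspan, hK0])
  let o (v : Fin n → ℂ) := Nat.findGreatest (v ∈ vanishingSubmodule A p ·) M
  have hb (v : S) : b v ∈ vanishingSubmodule A p (o v) := by
    rw [Basis.mk_apply]
    refine Nat.findGreatest_spec (P := (v.1 ∈ vanishingSubmodule A p ·)) (Nat.zero_le M) ?_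
    simp only [hK0, Submodule.mem_top]
  refine exists_analyticAt_det_eq_pow_mul b (fun v => o v) hb ?_
  rw [Finset.sum_coe_sort S o]
  exact sum_finrank_le_sum_findGreatest _ S M hSW

/-- Let `A : D → End(ℂⁿ)` be holomorphic on a domain `D` and `p ∈ D`.  For `j ≥ 1` let
`K_j` be the subspace of vectors `v` such that `z ↦ A(z)v` vanishes to order `≥ j` at `p`;
the dimensions `λ_m = dim K_{m+1}` form the singularity partition of `A` at `p`.  Then the
order of vanishing of `det A(z)` at `p` is at least `λ_0 + λ_1 + ⋯`, i.e. for every `M` the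
function `det A(z)` can be written near `p` as `(z−p)^{Σ_{m<M} λ_m}` times a function
analytic at `p`. -/
theorem stmt18 (n : ℕ) (D : Set ℂ) (hD : IsOpen D) (hconn : IsConnected D)
    (A : ℂ → Matrix (Fin n) (Fin n) ℂ)
    (hA : ∀ i j, DifferentiableOn ℂ (fun z => A z i j) D)
    (p : ℂ) (hp : p ∈ D) (M : ℕ) :
    ∃ g : ℂ → ℂ, AnalyticAt ℂ g p ∧
      ∀ᶠ z in nhds p, (A z).det =
        (z - p) ^ (∑ m ∈ Finset.range M, Module.finrank ℂ
            ↥(Submodule.span ℂ {v : Fin n → ℂ | ∀ i : Fin n,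
              ∃ g' : ℂ → ℂ, AnalyticAt ℂ g' p ∧
                ∀ᶠ z in nhds p, (A z).mulVec v i = (z - p) ^ (m + 1) * g' z})) * g z :=
  stmt18_general n D hD A hA p hp M
end
end
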